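/- Let μ be an inner node of T. On the set {ν ∈ T : μ < ν}, the relation ν ∼_tan ν' defined by (μ,ν] ∩ (μ,ν'] ≠ ∅ (where (μ,ν] = {ρ ∈ T : μ < ρ ≤ ν}) is an equivalence relation; let TD(μ) be the quotient set. For φ ∈ KP(μ), the class t_μ(φ) of the augmented valuation [μ; φ, γ] in TD(μ) is independent of the choice of γ ∈ Λ∪{∞} with γ > μ(φ). The resulting map t_μ : KP(μ) → TD(μ) is surjective, and t_μ(φ) = t_μ(φ*) holds if and only if φ ∼_μ φ*; hence t_μ induces a bijection between KP(μ)/∼_μ and TD(μ). -/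

import Mathlib

open Polynomial

namespace MLV

variable {K : Type*} [Field K] {Λ : Type*} [AddCommGroup Λ] [LinearOrder Λ] [IsOrderedAddMonoid Λ]

/-- A valuation on the field `K` with values in `Λ∞ = WithTop Λ`. -/
structure FieldVal (K : Type*) (Λ : Type*) [Field K] [AddCommGroup Λ] [LinearOrder Λ] [IsOrderedAddMonoid Λ] where
  v : K → WithTop Λ
  map_one' : v 1 = 0
  map_zero' : v 0 = ⊤
  ne_top' : ∀ a : K, a ≠ 0 → v a ≠ ⊤
  map_mul' : ∀ a b : K, v (a * b) = v a + v b
  map_add' : ∀ a b : K, min (v a) (v b) ≤ v (a + b)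

/-- `μ` is a node of the tree `T = T(Λ)`: a valuation on `K[x]` with values in `Λ∞`
whose restriction to `K` is `v`. -/
def IsValT (v : FieldVal K Λ) (μ : Polynomial K → WithTop Λ) : Prop :=
  μ 1 = 0 ∧ μ 0 = ⊤ ∧ (∀ f g : Polynomial K, μ (f * g) = μ f + μ g) ∧
    (∀ f g : Polynomial K, min (μ f) (μ g) ≤ μ (f + g)) ∧
    ∀ a : K, μ (C a) = v.v a

/-- `g ∼_μ h` : `μ(g - h) > μ(g)`. -/
def MuEquiv (μ : Polynomial K → WithTop Λ) (g h : Polynomial K) : Prop :=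
  μ g < μ (g - h)

/-- `h ∣_μ g` : `g ∼_μ f * h` for some `f`. -/
def MuDvd (μ : Polynomial K → WithTop Λ) (h g : Polynomial K) : Prop :=
  ∃ f : Polynomial K, MuEquiv μ g (f * h)

/-- `g ∈ K[x] \ K` is `μ`-minimal if it `μ`-divides no nonzero polynomial of smaller degree. -/
def IsMuMinimal (μ : Polynomial K → WithTop Λ) (g : Polynomial K) : Prop :=
  0 < g.natDegree ∧
    ∀ f : Polynomial K, f ≠ 0 → f.degree < g.degree → ¬ MuDvd μ g f

/-- `g` is `μ`-irreducible. -/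
def IsMuIrreducible (μ : Polynomial K → WithTop Λ) (g : Polynomial K) : Prop :=
  μ g ≠ ⊤ ∧ (¬ ∃ f : Polynomial K, MuEquiv μ (f * g) 1) ∧
    ∀ f h : Polynomial K, MuDvd μ g (f * h) → MuDvd μ g f ∨ MuDvd μ g h

/-- A (Maclane-Vaquié) key polynomial for `μ`. -/
def IsKeyPol (μ : Polynomial K → WithTop Λ) (φ : Polynomial K) : Prop :=
  φ.Monic ∧ IsMuMinimal μ φ ∧ IsMuIrreducible μ φ

/-- An inner node: a valuation admitting key polynomials. -/
def IsInnerNode (μ : Polynomial K → WithTop Λ) : Prop :=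
  ∃ φ : Polynomial K, IsKeyPol μ φ

/-- `deg(μ)`: the minimal degree of a key polynomial for `μ`. -/
noncomputable def degOf (μ : Polynomial K → WithTop Λ) : ℕ :=
  sInf {n : ℕ | ∃ φ : Polynomial K, IsKeyPol μ φ ∧ φ.natDegree = n}

/-- A key polynomial of minimal degree. -/
def IsMinKeyPol (μ : Polynomial K → WithTop Λ) (φ : Polynomial K) : Prop :=
  IsKeyPol μ φ ∧ ∀ ψ : Polynomial K, IsKeyPol μ ψ → φ.natDegree ≤ ψ.natDegree

/-- the class `[φ]_μ` of key polynomials `μ`-equivalent to `φ`. -/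
def KeyPolClass (μ : Polynomial K → WithTop Λ) (φ : Polynomial K) : Set (Polynomial K) :=
  {ψ : Polynomial K | IsKeyPol μ ψ ∧ MuEquiv μ ψ φ}

/-- The coefficient `a_s` of the `φ`-expansion `f = Σ_s a_s φ^s` (for `φ` monic nonconstant). -/
noncomputable def expCoeff (φ f : Polynomial K) (s : ℕ) : Polynomial K :=
  (f /ₘ φ ^ s) %ₘ φ

/-- The augmented valuation `[μ; φ, γ]`, acting on `φ`-expansions by
`ν(Σ_s a_s φ^s) = min_s (μ(a_s) + s γ)`. -/
noncomputable def augVal (μ : Polynomial K → WithTop Λ) (φ : Polynomial K)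
    (γ : WithTop Λ) (f : Polynomial K) : WithTop Λ :=
  (Finset.range (f.natDegree + 1)).inf'
    (Finset.nonempty_range_iff.mpr (Nat.succ_ne_zero _))
    fun s => μ (expCoeff φ f s) + s • γ

/-- The depth-zero valuation `ω_{a,δ}`, acting on `(x-a)`-expansions by
`ω(Σ_s a_s (x-a)^s) = min_s (v(a_s) + s δ)`. -/
noncomputable def omegaVal (v : FieldVal K Λ) (a : K) (δ : WithTop Λ)
    (f : Polynomial K) : WithTop Λ :=
  (Finset.range (f.natDegree + 1)).inf'
    (Finset.nonempty_range_iff.mpr (Nat.succ_ne_zero _))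
    fun s => v.v ((taylor a f).coeff s) + s • δ

/-- The tangent direction `t(μ,ν)`: monic polynomials of minimal degree with `μ(φ) < ν(φ)`. -/
def TangentDir (μ ν : Polynomial K → WithTop Λ) : Set (Polynomial K) :=
  {φ : Polynomial K | φ.Monic ∧ μ φ < ν φ ∧
    ∀ ψ : Polynomial K, ψ.Monic → μ ψ < ν ψ → φ.natDegree ≤ ψ.natDegree}

/-- The set of finite values of `μ`. -/
def valSet (μ : Polynomial K → WithTop Λ) : Set Λ :=
  {γ : Λ | ∃ f : Polynomial K, μ f = (γ : WithTop Λ)}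

/-- The value group `Γ_μ`. -/
def valGroup (μ : Polynomial K → WithTop Λ) : AddSubgroup Λ :=
  AddSubgroup.closure (valSet μ)

/-- `Γ = v(K^*)` as a subset of `Λ`. -/
def gammaSet (v : FieldVal K Λ) : Set Λ :=
  {γ : Λ | ∃ a : K, v.v a = (γ : WithTop Λ)}

/-- The value group `Γ` of the base field valuation. -/
def baseGroup (v : FieldVal K Λ) : AddSubgroup Λ :=
  AddSubgroup.closure (gammaSet v)

/-- `μ` is commensurable over `v` : `Γ_μ/Γ` is torsion. -/
def IsCommensurable (v : FieldVal K Λ) (μ : Polynomial K → WithTop Λ) : Prop :=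
  ∀ γ : Λ, γ ∈ valGroup μ → ∃ n : ℕ, 0 < n ∧ n • γ ∈ baseGroup v

/-- `Γ_μ^0 = {μ(a) : a ∈ K[x], 0 ≤ deg(a) < deg(μ)}`. -/
noncomputable def degZeroSet (μ : Polynomial K → WithTop Λ) : Set Λ :=
  {δ : Λ | ∃ a : Polynomial K, a ≠ 0 ∧ a.natDegree < degOf μ ∧ μ a = (δ : WithTop Λ)}

/-- Equivalence of valuations: an order-preserving isomorphism `ι : Γ_μ → Γ_ν`
with `ν = ι ∘ μ`. -/
def ValEquiv (μ ν : Polynomial K → WithTop Λ) : Prop :=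
  ∃ ι : valGroup μ ≃+ valGroup ν,
    Monotone ι ∧ (∀ f : Polynomial K, μ f = ⊤ ↔ ν f = ⊤) ∧
    ∀ (f : Polynomial K) (γ : Λ) (h : μ f = (γ : WithTop Λ)),
      ν f = ((ι ⟨γ, AddSubgroup.subset_closure ⟨f, h⟩⟩ : Λ) : WithTop Λ)

/-- `β ∼_sme γ` : an order-preserving isomorphism `⟨Γ,β⟩ → ⟨Γ,γ⟩` fixing `Γ`
and mapping `β` to `γ`. -/
def SmeEquiv (v : FieldVal K Λ) (β γ : Λ) : Prop :=
  ∃ ι : (AddSubgroup.closure (gammaSet v ∪ {β}) : AddSubgroup Λ) ≃+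
      (AddSubgroup.closure (gammaSet v ∪ {γ}) : AddSubgroup Λ),
    Monotone ι ∧
    (∀ (a : Λ) (ha : a ∈ gammaSet v),
      ((ι ⟨a, AddSubgroup.subset_closure (Set.mem_union_left _ ha)⟩ : Λ) = a)) ∧
    ((ι ⟨β, AddSubgroup.subset_closure (Set.mem_union_right _ rfl)⟩ : Λ) = γ)

section Families

variable {ι : Type*} [LinearOrder ι]

/-- A totally ordered family of inner nodes of `T`, indexed order-isomorphically by a
totally ordered set, containing no maximal element. -/
def IsTOFamily (v : FieldVal K Λ) (ρ : ι → Polynomial K → WithTop Λ) : Prop :=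
  (∀ i, IsValT v (ρ i)) ∧ (∀ i, IsInnerNode (ρ i)) ∧ StrictMono ρ ∧
    ∀ i : ι, ∃ j : ι, i < j

/-- `f` is `A`-stable: the values `ρ_i(f)` are eventually constant. -/
def IsStablePoly (ρ : ι → Polynomial K → WithTop Λ) (f : Polynomial K) : Prop :=
  ∃ i : ι, ∀ j : ι, i ≤ j → ρ j f = ρ i f

/-- `β` is the stable value `ρ_A(f)`. -/
def IsStableVal (ρ : ι → Polynomial K → WithTop Λ) (f : Polynomial K)
    (β : WithTop Λ) : Prop :=
  ∃ i : ι, ∀ j : ι, i ≤ j → ρ j f = β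

open Classical in
/-- The stability function `ρ_A` (junk value `⊤` on unstable polynomials). -/
noncomputable def stableVal (ρ : ι → Polynomial K → WithTop Λ) (f : Polynomial K) :
    WithTop Λ :=
  if h : ∃ β : WithTop Λ, IsStableVal ρ f β then h.choose else ⊤

/-- The family has stable degree `m`. -/
def HasStableDeg (ρ : ι → Polynomial K → WithTop Λ) (m : ℕ) : Prop :=
  ∃ i : ι, ∀ j : ι, i ≤ j → degOf (ρ j) = m

/-- A continuous family: a totally ordered family of eventually constant degree. -/
def IsContFamily (v : FieldVal K Λ) (ρ : ι → Polynomial K → WithTop Λ) : Prop :=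
  IsTOFamily v ρ ∧ ∃ m : ℕ, HasStableDeg ρ m

/-- The stable group `Γ_C`: stable values of nonzero stable polynomials. -/
def stableSet (ρ : ι → Polynomial K → WithTop Λ) : Set Λ :=
  {δ : Λ | ∃ f : Polynomial K, f ≠ 0 ∧ IsStableVal ρ f (δ : WithTop Λ)}

/-- A limit key polynomial: monic, unstable, of minimal degree among unstable polynomials. -/
def IsLimKeyPol (ρ : ι → Polynomial K → WithTop Λ) (φ : Polynomial K) : Prop :=
  φ.Monic ∧ ¬ IsStablePoly ρ φ ∧
    ∀ f : Polynomial K, ¬ IsStablePoly ρ f → φ.natDegree ≤ f.natDegree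

/-- An essential continuous family: `m(C) < m_∞(C) < ∞`. -/
def IsEssential (v : FieldVal K Λ) (ρ : ι → Polynomial K → WithTop Λ) : Prop :=
  IsTOFamily v ρ ∧
    ∃ m : ℕ, HasStableDeg ρ m ∧
      ∃ φ : Polynomial K, IsLimKeyPol ρ φ ∧ m < φ.natDegree

/-- The limit augmentation `[C; φ, γ]`, acting on `φ`-expansions by
`ν(Σ_s a_s φ^s) = min_s (ρ_C(a_s) + s γ)`. -/
noncomputable def limAugVal (ρ : ι → Polynomial K → WithTop Λ) (φ : Polynomial K)
    (γ : WithTop Λ) (f : Polynomial K) : WithTop Λ :=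
  (Finset.range (f.natDegree + 1)).inf'
    (Finset.nonempty_range_iff.mpr (Nat.succ_ne_zero _))
    fun s => stableVal ρ (expCoeff φ f s) + s • γ

/-- Equivalence of totally ordered families: mutual cofinality. -/
def FamEquiv {κ : Type*} [LinearOrder κ] (ρ : ι → Polynomial K → WithTop Λ)
    (σ : κ → Polynomial K → WithTop Λ) : Prop :=
  (∀ i : ι, ∃ j : κ, ρ i ≤ σ j) ∧ ∀ j : κ, ∃ i : ι, σ j ≤ ρ i

end Families

end MLV

open MLV

/-- `ν ∼_tan ν'` : the intervals `(μ,ν]` and `(μ,ν']` in `T` meet. -/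
def TanRel {K : Type*} [Field K] {Λ : Type*} [AddCommGroup Λ] [LinearOrder Λ] [IsOrderedAddMonoid Λ]
    (v : FieldVal K Λ) (μ ν ν' : Polynomial K → WithTop Λ) : Prop :=
  ∃ ρ : Polynomial K → WithTop Λ, IsValT v ρ ∧ μ < ρ ∧ ρ ≤ ν ∧ ρ ≤ ν'

/-!
For `μ < ν`, the monic polynomials of least degree on which `ν` exceeds `μ` (the set
`TangentDir μ ν`) are key polynomials for `μ`, any two of them are `μ`-equivalent, and they lie
in `TangentDir μ ρ` for every `ρ ∈ (μ, ν]`. For a key polynomial `φ`, the augmentation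
`[μ; φ, γ]` is a node of `T` with `φ ∈ TangentDir μ [μ; φ, γ]`, and it lies below every node
`ρ ≥ μ` with `ρ(φ) ≥ γ`. Hence two nodes exceeding `μ` at a common key polynomial `φ` both
dominate `[μ; φ, δ]`, `δ` the smaller of their values at `φ`. This gives transitivity of `∼_tan`,
independence of `γ` and surjectivity of `t_μ`, and identifies its fibres with the
`μ`-equivalence classes.
-/

namespace Polynomial

variable {R : Type*} [CommRing R]

theorem divByMonic_add {q : R[X]} (hq : q.Monic) (f g : R[X]) :
    (f + g) /ₘ q = f /ₘ q + g /ₘ q := by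
  nontriviality R
  refine (div_modByMonic_unique _ (f %ₘ q + g %ₘ q) hq ⟨?_, ?_⟩).1
  · linear_combination modByMonic_add_div f q + modByMonic_add_div g q
  · exact (degree_add_le _ _).trans_lt
      (max_lt (degree_modByMonic_lt f hq) (degree_modByMonic_lt g hq))

theorem divByMonic_divByMonic {p q : R[X]} (hp : p.Monic) (hq : q.Monic) (f : R[X]) :
    f /ₘ p /ₘ q = f /ₘ (p * q) := by
  nontriviality R
  refine ((div_modByMonic_unique _ (f %ₘ p + p * (f /ₘ p %ₘ q)) (hp.mul hq) ⟨?_, ?_⟩).1).symm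
  · linear_combination modByMonic_add_div f p + p * modByMonic_add_div (f /ₘ p) q
  · have hp0 : p.degree ≠ ⊥ := degree_ne_bot.mpr hp.ne_zero
    rw [mul_comm p q, hp.degree_mul]
    refine (degree_add_le _ _).trans_lt (max_lt ?_ ?_)
    · exact (degree_modByMonic_lt f hp).trans_le
        (le_add_of_nonneg_left (zero_le_degree_iff.mpr hq.ne_zero))
    · rw [mul_comm, hp.degree_mul]
      exact WithBot.add_lt_add_right hp0 (degree_modByMonic_lt _ hq)

end Polynomial

namespace MLV

open Finset

variable {K : Type*} [Field K] {Λ : Type*} [AddCommGroup Λ] [LinearOrder Λ] [IsOrderedAddMonoid Λ]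
  {v : FieldVal K Λ} {μ ν ρ : K[X] → WithTop Λ} {φ ψ g : K[X]} {γ : WithTop Λ}

section Expansion

theorem expCoeff_zero_eq_modByMonic (f : K[X]) : expCoeff φ f 0 = f %ₘ φ := by
  rw [expCoeff, pow_zero, divByMonic_one]

variable (hφ : φ.Monic)
include hφ

theorem expCoeff_divByMonic_pow (f : K[X]) (n s : ℕ) :
    expCoeff φ (f /ₘ φ ^ n) s = expCoeff φ f (n + s) := by
  rw [expCoeff, expCoeff, divByMonic_divByMonic (hφ.pow n) (hφ.pow s), pow_add]

theorem expCoeff_add (f g : K[X]) (s : ℕ) :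
    expCoeff φ (f + g) s = expCoeff φ f s + expCoeff φ g s := by
  rw [expCoeff, divByMonic_add (hφ.pow s), add_modByMonic]; rfl

theorem expCoeff_neg (f : K[X]) (s : ℕ) : expCoeff φ (-f) s = -expCoeff φ f s := by
  rw [eq_neg_iff_add_eq_zero, ← expCoeff_add hφ, neg_add_cancel, expCoeff,
    zero_divByMonic, zero_modByMonic]

theorem degree_lt_degree_pow {f : K[X]} (hf : f.degree < φ.degree) {s : ℕ} (hs : s ≠ 0) :
    f.degree < (φ ^ s).degree := by
  obtain ⟨k, rfl⟩ := Nat.exists_eq_succ_of_ne_zero hs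
  rw [pow_succ']
  exact hf.trans_le (degree_le_mul_left φ (hφ.pow k).ne_zero)

theorem degree_lt_degree_pow_of_natDegree_lt (hφ0 : 0 < φ.natDegree) {f : K[X]} {s : ℕ}
    (hs : f.natDegree < s) : f.degree < (φ ^ s).degree := by
  rw [degree_eq_natDegree (hφ.pow s).ne_zero, hφ.natDegree_pow]
  exact degree_le_natDegree.trans_lt
    (by exact_mod_cast hs.trans_le (Nat.le_mul_of_pos_right s hφ0))

theorem expCoeff_eq_zero_of_natDegree_lt (hφ0 : 0 < φ.natDegree) {f : K[X]} {s : ℕ}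
    (hs : f.natDegree < s) : expCoeff φ f s = 0 := by
  rw [expCoeff, (divByMonic_eq_zero_iff (hφ.pow s)).mpr
    (degree_lt_degree_pow_of_natDegree_lt hφ hφ0 hs), zero_modByMonic]

theorem expCoeff_of_degree_lt {f : K[X]} (hf : f.degree < φ.degree) (s : ℕ) :
    expCoeff φ f s = if s = 0 then f else 0 := by
  split_ifs with hs
  · rw [hs, expCoeff_zero_eq_modByMonic, (modByMonic_eq_self_iff hφ).mpr hf]
  · rw [expCoeff, (divByMonic_eq_zero_iff (hφ.pow s)).mpr (degree_lt_degree_pow hφ hf hs),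
      zero_modByMonic]

theorem expCoeff_mul_pow_add (f : K[X]) (n s : ℕ) :
    expCoeff φ (f * φ ^ n) (n + s) = expCoeff φ f s := by
  rw [← expCoeff_divByMonic_pow hφ, mul_comm, mul_divByMonic_cancel_left _ (hφ.pow n)]

theorem expCoeff_mul_pow_of_lt (f : K[X]) {n s : ℕ} (hs : s < n) :
    expCoeff φ (f * φ ^ n) s = 0 := by
  obtain ⟨k, rfl⟩ := Nat.exists_eq_add_of_lt hs
  rw [expCoeff, show f * φ ^ (s + k + 1) = φ ^ s * (f * φ ^ k * φ) by ring,
    mul_divByMonic_cancel_left _ (hφ.pow s), (modByMonic_eq_zero_iff_dvd hφ).mpr (dvd_mul_left _ _)]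

theorem expCoeff_mul_pow (f : K[X]) (n s : ℕ) :
    expCoeff φ (f * φ ^ n) s = if n ≤ s then expCoeff φ f (s - n) else 0 := by
  split_ifs with h
  · rw [← expCoeff_mul_pow_add hφ f n, Nat.add_sub_cancel' h]
  · exact expCoeff_mul_pow_of_lt hφ f (not_le.mp h)

theorem sum_expCoeff_add_divByMonic (f : K[X]) (n : ℕ) :
    ∑ s ∈ range n, expCoeff φ f s * φ ^ s + φ ^ n * (f /ₘ φ ^ n) = f := by
  induction n with
  | zero => simp
  | succ n ih =>
    rw [sum_range_succ, pow_succ, ← divByMonic_divByMonic (hφ.pow n) hφ, expCoeff]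
    linear_combination ih + φ ^ n * modByMonic_add_div (f /ₘ φ ^ n) φ

theorem sum_expCoeff (hφ0 : 0 < φ.natDegree) {f : K[X]} {n : ℕ} (hn : f.natDegree < n) :
    ∑ s ∈ range n, expCoeff φ f s * φ ^ s = f := by
  conv_rhs => rw [← sum_expCoeff_add_divByMonic hφ f n]
  rw [(divByMonic_eq_zero_iff (hφ.pow n)).mpr
    (degree_lt_degree_pow_of_natDegree_lt hφ hφ0 hn), mul_zero, add_zero]

theorem expCoeff_modByMonic_pow (f : K[X]) (n s : ℕ) :
    expCoeff φ (f %ₘ φ ^ n) s = if s < n then expCoeff φ f s else 0 := by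
  split_ifs with h
  · conv_rhs => rw [← modByMonic_add_div f (φ ^ n), expCoeff_add hφ, mul_comm,
      expCoeff_mul_pow_of_lt hφ _ h, add_zero]
  · obtain ⟨k, rfl⟩ := Nat.exists_eq_add_of_le (not_lt.mp h)
    have hdeg : (f %ₘ φ ^ n).degree < (φ ^ (n + k)).degree := by
      rw [pow_add]
      exact (degree_modByMonic_lt f (hφ.pow n)).trans_le (degree_le_mul_left _ (hφ.pow k).ne_zero)
    rw [expCoeff, (divByMonic_eq_zero_iff (hφ.pow _)).mpr hdeg, zero_modByMonic]

end Expansion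

namespace IsValT

noncomputable def toAddValuation (hμ : IsValT v μ) : AddValuation K[X] (WithTop Λ) :=
  AddValuation.of μ hμ.2.1 hμ.1 hμ.2.2.2.1 hμ.2.2.1

variable (hμ : IsValT v μ)
include hμ

theorem map_one : μ 1 = 0 := hμ.1

theorem map_zero : μ 0 = ⊤ := hμ.2.1

theorem map_mul (f g : K[X]) : μ (f * g) = μ f + μ g := hμ.2.2.1 f g

theorem min_le_map_add (f g : K[X]) : min (μ f) (μ g) ≤ μ (f + g) := hμ.2.2.2.1 f g

theorem map_C (a : K) : μ (C a) = v.v a := hμ.2.2.2.2 a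

theorem map_pow (f : K[X]) (n : ℕ) : μ (f ^ n) = n • μ f := hμ.toAddValuation.map_pow f n

theorem map_neg (f : K[X]) : μ (-f) = μ f := hμ.toAddValuation.map_neg f

theorem map_sub_swap (f g : K[X]) : μ (f - g) = μ (g - f) := hμ.toAddValuation.map_sub_swap f g

theorem min_le_map_sub (f g : K[X]) : min (μ f) (μ g) ≤ μ (f - g) :=
  hμ.toAddValuation.map_sub f g

theorem map_add_of_lt {f g : K[X]} (h : μ f < μ g) : μ (f + g) = μ f :=
  hμ.toAddValuation.map_add_eq_of_lt_left h

theorem le_map_sum {ι : Type*} {s : Finset ι} {F : ι → K[X]} {b : WithTop Λ}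
    (h : ∀ i ∈ s, b ≤ μ (F i)) : b ≤ μ (∑ i ∈ s, F i) :=
  hμ.toAddValuation.map_le_sum h

theorem map_eq_of_muEquiv {g h : K[X]} (hgh : MuEquiv μ g h) : μ h = μ g :=
  hμ.toAddValuation.map_eq_of_lt_sub (by rwa [MuEquiv, hμ.map_sub_swap] at hgh)

end IsValT

theorem MuEquiv.symm (hμ : IsValT v μ) {g h : K[X]} (hgh : MuEquiv μ g h) : MuEquiv μ h g := by
  rwa [MuEquiv, hμ.map_eq_of_muEquiv hgh, hμ.map_sub_swap]

theorem exists_monic_of_lt (hμ : IsValT v μ) (hν : IsValT v ν) {f : K[X]} (hf : μ f < ν f) :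
    ∃ g : K[X], g.Monic ∧ g.natDegree = f.natDegree ∧ μ g < ν g := by
  have hf0 : f ≠ 0 := by rintro rfl; simp [hμ.map_zero] at hf
  have hc : f.leadingCoeff⁻¹ ≠ 0 := inv_ne_zero (leadingCoeff_ne_zero.mpr hf0)
  refine ⟨f * C f.leadingCoeff⁻¹, monic_mul_leadingCoeff_inv hf0, natDegree_mul_C hc, ?_⟩
  rw [hμ.map_mul, hν.map_mul, hμ.map_C, hν.map_C]
  exact WithTop.add_lt_add_right (v.ne_top' _ hc) hf

omit [IsOrderedAddMonoid Λ] in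
theorem exists_augVal_eq (f : K[X]) : ∃ s, augVal μ φ γ f = μ (expCoeff φ f s) + s • γ := by
  obtain ⟨s, -, hs⟩ := exists_mem_eq_inf' (nonempty_range_add_one (n := f.natDegree))
    fun s => μ (expCoeff φ f s) + s • γ
  exact ⟨s, hs⟩

theorem augVal_neg (hμ : IsValT v μ) (hφ : φ.Monic) (f : K[X]) :
    augVal μ φ γ (-f) = augVal μ φ γ f := by
  simp only [augVal, natDegree_neg, expCoeff_neg hφ, hμ.map_neg]

section AugVal

variable (hμ : IsValT v μ) (hφ : φ.Monic) (hφ0 : 0 < φ.natDegree)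
include hμ hφ hφ0

theorem augVal_le (f : K[X]) (s : ℕ) : augVal μ φ γ f ≤ μ (expCoeff φ f s) + s • γ := by
  by_cases hs : s ≤ f.natDegree
  · exact inf'_le _ (mem_range.mpr (Nat.lt_succ_of_le hs))
  · rw [expCoeff_eq_zero_of_natDegree_lt hφ hφ0 (not_le.mp hs), hμ.map_zero, top_add]
    exact le_top

theorem le_augVal_iff {f : K[X]} {b : WithTop Λ} :
    b ≤ augVal μ φ γ f ↔ ∀ s, b ≤ μ (expCoeff φ f s) + s • γ :=
  ⟨fun h s => h.trans (augVal_le hμ hφ hφ0 f s), fun h => le_inf' _ _ fun s _ => h s⟩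

theorem augVal_mul_pow (f : K[X]) (n : ℕ) :
    augVal μ φ γ (f * φ ^ n) = augVal μ φ γ f + n • γ := by
  apply le_antisymm
  · obtain ⟨s, hs⟩ := exists_augVal_eq (μ := μ) (φ := φ) (γ := γ) f
    calc augVal μ φ γ (f * φ ^ n) ≤ μ (expCoeff φ (f * φ ^ n) (n + s)) + (n + s) • γ :=
          augVal_le hμ hφ hφ0 _ _
      _ = augVal μ φ γ f + n • γ := by
          rw [expCoeff_mul_pow_add hφ, hs, add_nsmul]; abel
  · refine (le_augVal_iff hμ hφ hφ0).mpr fun u => ?_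
    rw [expCoeff_mul_pow hφ]
    split_ifs with h
    · obtain ⟨s, rfl⟩ := Nat.exists_eq_add_of_le h
      rw [Nat.add_sub_cancel_left, add_nsmul, add_comm (n • γ), ← add_assoc]
      gcongr
      exact augVal_le hμ hφ hφ0 f s
    · rw [hμ.map_zero, top_add]
      exact le_top

theorem augVal_of_degree_lt {f : K[X]} (hf : f.degree < φ.degree) : augVal μ φ γ f = μ f := by
  apply le_antisymm
  · simpa [expCoeff_zero_eq_modByMonic, (modByMonic_eq_self_iff hφ).mpr hf] using
      augVal_le hμ hφ hφ0 (γ := γ) f 0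
  · refine (le_augVal_iff hμ hφ hφ0).mpr fun s => ?_
    rw [expCoeff_of_degree_lt hφ hf]
    split_ifs with h
    · simp [h]
    · simp [hμ.map_zero]

theorem augVal_monomial {a : K[X]} (ha : a.degree < φ.degree) (n : ℕ) :
    augVal μ φ γ (a * φ ^ n) = μ a + n • γ := by
  rw [augVal_mul_pow hμ hφ hφ0, augVal_of_degree_lt hμ hφ hφ0 ha]

theorem augVal_self : augVal μ φ γ φ = γ := by
  have h1 : (1 : K[X]).degree < φ.degree := by
    rw [degree_one, degree_eq_natDegree hφ.ne_zero]; exact_mod_cast hφ0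
  simpa [hμ.map_one] using augVal_monomial hμ hφ hφ0 (γ := γ) h1 1

theorem augVal_C (a : K) : augVal μ φ γ (C a) = v.v a := by
  rw [augVal_of_degree_lt hμ hφ hφ0, hμ.map_C]
  rw [degree_eq_natDegree hφ.ne_zero]
  exact degree_C_le.trans_lt (by exact_mod_cast hφ0)

theorem min_augVal_le_augVal_add (f g : K[X]) :
    min (augVal μ φ γ f) (augVal μ φ γ g) ≤ augVal μ φ γ (f + g) := by
  refine (le_augVal_iff hμ hφ hφ0).mpr fun s => ?_
  rw [expCoeff_add hφ]
  calc min (augVal μ φ γ f) (augVal μ φ γ g)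
      ≤ min (μ (expCoeff φ f s) + s • γ) (μ (expCoeff φ g s) + s • γ) :=
        min_le_min (augVal_le hμ hφ hφ0 f s) (augVal_le hμ hφ hφ0 g s)
    _ ≤ μ (expCoeff φ f s + expCoeff φ g s) + s • γ := by
        rw [min_add_add_right]
        gcongr
        exact hμ.min_le_map_add _ _

theorem le_augVal_sum {ι : Type*} (s : Finset ι) {F : ι → K[X]} {b : WithTop Λ}
    (h : ∀ i ∈ s, b ≤ augVal μ φ γ (F i)) : b ≤ augVal μ φ γ (∑ i ∈ s, F i) := by
  classical
  induction s using Finset.induction_on with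
  | empty =>
    simp [augVal_of_degree_lt hμ hφ hφ0 (degree_zero.trans_lt (bot_lt_iff_ne_bot.mpr
      (degree_ne_bot.mpr hφ.ne_zero))), hμ.map_zero]
  | insert i s hi ih =>
    rw [sum_insert hi]
    exact (le_min (h i (mem_insert_self i s)) (ih fun j hj => h j (mem_insert_of_mem hj))).trans
      (min_augVal_le_augVal_add hμ hφ hφ0 _ _)

theorem augVal_le_of_le (hρ : IsValT v ρ) (hle : μ ≤ ρ) (hγ : γ ≤ ρ φ) (f : K[X]) :
    augVal μ φ γ f ≤ ρ f := by
  conv_rhs => rw [← sum_expCoeff hφ hφ0 (Nat.lt_succ_self f.natDegree)]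
  refine hρ.le_map_sum fun s _ => ?_
  rw [hρ.map_mul, hρ.map_pow]
  exact (augVal_le hμ hφ hφ0 f s).trans (add_le_add (hle _) (nsmul_le_nsmul_right hγ s))

theorem exists_augVal_lt_augVal_modByMonic {f : K[X]} (hf : augVal μ φ γ f ≠ ⊤) :
    ∃ n : ℕ, augVal μ φ γ f < augVal μ φ γ (f %ₘ φ ^ n) ∧
      augVal μ φ γ f ≤ augVal μ φ γ (f /ₘ φ ^ n * φ ^ n) ∧
      μ (f /ₘ φ ^ n %ₘ φ) + n • γ = augVal μ φ γ f := by
  classical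
  have hP : ∃ s, augVal μ φ γ f = μ (expCoeff φ f s) + s • γ := exists_augVal_eq f
  refine ⟨Nat.find hP, ?_, ?_, (Nat.find_spec hP).symm⟩
  · obtain ⟨s, hs⟩ := exists_augVal_eq (μ := μ) (γ := γ) (f %ₘ φ ^ Nat.find hP)
    rw [hs, expCoeff_modByMonic_pow hφ]
    split_ifs with h
    · exact (augVal_le hμ hφ hφ0 f s).lt_of_ne fun he => Nat.find_min hP h he
    · rwa [hμ.map_zero, top_add, lt_top_iff_ne_top]
  · rw [augVal_mul_pow hμ hφ hφ0]
    obtain ⟨s, hs⟩ := exists_augVal_eq (μ := μ) (γ := γ) (f /ₘ φ ^ Nat.find hP)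
    rw [hs, expCoeff_divByMonic_pow hφ, add_assoc, ← add_nsmul, add_comm s]
    exact augVal_le hμ hφ hφ0 f _

end AugVal

namespace IsMuMinimal

variable (hμ : IsValT v μ) (hφ : φ.Monic) (hmin : IsMuMinimal μ φ)
include hμ hφ hmin

theorem map_le_map_modByMonic (f : K[X]) : μ f ≤ μ (f %ₘ φ) := by
  by_contra! h
  refine hmin.2 (f %ₘ φ) ?_ (degree_modByMonic_lt f hφ) ⟨-(f /ₘ φ), ?_⟩
  · rintro h0
    rw [h0, hμ.map_zero] at h
    exact not_top_lt h
  · rwa [MuEquiv, show f %ₘ φ - -(f /ₘ φ) * φ = f by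
      linear_combination modByMonic_add_div f φ]

theorem map_le_map_add_map_divByMonic (f : K[X]) : μ f ≤ μ φ + μ (f /ₘ φ) := by
  rw [← hμ.map_mul, show φ * (f /ₘ φ) = f - f %ₘ φ by
    linear_combination modByMonic_add_div f φ]
  exact (le_min le_rfl (hmin.map_le_map_modByMonic hμ hφ f)).trans (hμ.min_le_map_sub _ _)

theorem map_le_map_expCoeff (f : K[X]) (s : ℕ) : μ f ≤ μ (expCoeff φ f s) + s • μ φ := by
  induction s generalizing f with
  | zero => simpa [expCoeff_zero_eq_modByMonic] using hmin.map_le_map_modByMonic hμ hφ f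
  | succ s ih =>
    rw [add_comm s 1, ← expCoeff_divByMonic_pow hφ, pow_one, add_nsmul, one_nsmul]
    calc μ f ≤ μ φ + μ (f /ₘ φ) := hmin.map_le_map_add_map_divByMonic hμ hφ f
      _ ≤ μ φ + (μ (expCoeff φ (f /ₘ φ) s) + s • μ φ) := by gcongr; exact ih _
      _ = _ := by abel

theorem le_augVal (hγ : μ φ ≤ γ) : μ ≤ augVal μ φ γ := fun f =>
  (le_augVal_iff hμ hφ hmin.1).mpr fun s =>
    (hmin.map_le_map_expCoeff hμ hφ f s).trans (by gcongr)

theorem lt_augVal (hγ : μ φ < γ) : μ < augVal μ φ γ :=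
  Pi.lt_def.mpr ⟨hmin.le_augVal hμ hφ hγ.le, φ, by rwa [augVal_self hμ hφ hmin.1]⟩

end IsMuMinimal

namespace IsKeyPol

variable (hμ : IsValT v μ) (hk : IsKeyPol μ φ)
include hμ hk

theorem map_modByMonic_mul {a b : K[X]} (ha : a.degree < φ.degree) (hb : b.degree < φ.degree) :
    μ ((a * b) %ₘ φ) = μ a + μ b := by
  obtain ⟨hφ, hmin, hirr⟩ := hk
  rw [← hμ.map_mul]
  refine ((hmin.map_le_map_modByMonic hμ hφ _).lt_or_eq.resolve_left fun hlt => ?_).symm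
  have hne : ∀ c, μ c ≠ ⊤ → c ≠ 0 := fun c hc h0 => hc (h0 ▸ hμ.map_zero)
  have hdvd : MuDvd μ φ (a * b) := ⟨(a * b) /ₘ φ, by
    rwa [MuEquiv, show a * b - (a * b) /ₘ φ * φ = (a * b) %ₘ φ by
      linear_combination -modByMonic_add_div (a * b) φ]⟩
  rcases hirr.2.2 a b hdvd with hda | hdb
  · exact hmin.2 a (hne a fun h => hlt.ne_top (by rw [hμ.map_mul, h, top_add])) ha hda
  · exact hmin.2 b (hne b fun h => hlt.ne_top (by rw [hμ.map_mul, h, add_top])) hb hdb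

variable (hγ : μ φ ≤ γ)
include hγ

theorem add_le_augVal_mul_of_degree_lt {a b : K[X]} (ha : a.degree < φ.degree)
    (hb : b.degree < φ.degree) : μ a + μ b ≤ augVal μ φ γ (a * b) := by
  have ⟨hφ, hmin, _⟩ := hk
  have hq := augVal_mul_pow hμ hφ hmin.1 (γ := γ) ((a * b) /ₘ φ) 1
  rw [pow_one, one_nsmul] at hq
  rw [← modByMonic_add_div (a * b) φ, mul_comm φ]
  refine le_trans (le_min ?_ ?_) (min_augVal_le_augVal_add hμ hφ hmin.1 _ _)
  · rw [augVal_of_degree_lt hμ hφ hmin.1 (degree_modByMonic_lt _ hφ),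
      map_modByMonic_mul hμ hk ha hb]
  · rw [hq, ← hμ.map_mul]
    calc μ (a * b) ≤ μ φ + μ ((a * b) /ₘ φ) := hmin.map_le_map_add_map_divByMonic hμ hφ _
      _ ≤ augVal μ φ γ ((a * b) /ₘ φ) + γ := by
          rw [add_comm]; gcongr; exact hmin.le_augVal hμ hφ hγ _

theorem augVal_add_augVal_le_augVal_mul (f g : K[X]) :
    augVal μ φ γ f + augVal μ φ γ g ≤ augVal μ φ γ (f * g) := by
  have ⟨hφ, hmin, _⟩ := hk
  have hfg : f * g = ∑ s ∈ range (f.natDegree + 1), ∑ t ∈ range (g.natDegree + 1),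
      expCoeff φ f s * expCoeff φ g t * φ ^ (s + t) := by
    conv_lhs => rw [← sum_expCoeff hφ hmin.1 (Nat.lt_succ_self f.natDegree),
      ← sum_expCoeff hφ hmin.1 (Nat.lt_succ_self g.natDegree)]
    rw [sum_mul_sum]
    exact sum_congr rfl fun s _ => sum_congr rfl fun t _ => by ring
  rw [hfg]
  refine le_augVal_sum hμ hφ hmin.1 _ fun s _ => le_augVal_sum hμ hφ hmin.1 _ fun t _ => ?_
  rw [augVal_mul_pow hμ hφ hmin.1, add_nsmul]
  calc augVal μ φ γ f + augVal μ φ γ g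
      ≤ (μ (expCoeff φ f s) + s • γ) + (μ (expCoeff φ g t) + t • γ) :=
        add_le_add (augVal_le hμ hφ hmin.1 f s) (augVal_le hμ hφ hmin.1 g t)
    _ = (μ (expCoeff φ f s) + μ (expCoeff φ g t)) + (s • γ + t • γ) := by abel
    _ ≤ _ := by
        gcongr
        exact hk.add_le_augVal_mul_of_degree_lt hμ hγ (degree_modByMonic_lt _ hφ)
          (degree_modByMonic_lt _ hφ)

theorem augVal_mul (f g : K[X]) :
    augVal μ φ γ (f * g) = augVal μ φ γ f + augVal μ φ γ g := by
  have ⟨hφ, hmin, _⟩ := hk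
  have hφ0 := hmin.1
  refine le_antisymm ?_ (hk.augVal_add_augVal_le_augVal_mul hμ hγ f g)
  set c := augVal μ φ γ f + augVal μ φ γ g
  by_cases hc : c = ⊤
  · exact hc ▸ le_top
  have hf : augVal μ φ γ f ≠ ⊤ := fun h => hc (by simp [c, h])
  have hg : augVal μ φ γ g ≠ ⊤ := fun h => hc (by simp [c, h])
  -- Split `f = f %ₘ φ ^ s + F * φ ^ s` at the least index `s` attaining `augVal f`, and `g`
  -- likewise. In `f * g` only `F * G * φ ^ (s + t)` can have value `≤ c`: its `(s + t)`-th
  -- coefficient is `(F %ₘ φ) * (G %ₘ φ) %ₘ φ`, whose value is exactly the sum by irreducibility.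
  obtain ⟨s, hf₁, hF, hFs⟩ := exists_augVal_lt_augVal_modByMonic hμ hφ hφ0 hf
  obtain ⟨t, hg₁, -, hGt⟩ := exists_augVal_lt_augVal_modByMonic hμ hφ hφ0 hg
  set F := f /ₘ φ ^ s
  set G := g /ₘ φ ^ t
  set X := f %ₘ φ ^ s * g + F * φ ^ s * (g %ₘ φ ^ t)
  set Y := F * G * φ ^ (s + t)
  have hfg : f * g = X + Y := by
    simp only [X, Y, F, G]
    linear_combination (-g) * modByMonic_add_div f (φ ^ s) -
      φ ^ s * (f /ₘ φ ^ s) * modByMonic_add_div g (φ ^ t)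
  have hX : c < augVal μ φ γ X := by
    refine lt_of_lt_of_le (lt_min ?_ ?_) (min_augVal_le_augVal_add hμ hφ hφ0 _ _)
    · exact (WithTop.add_lt_add_right hg hf₁).trans_le
        (hk.augVal_add_augVal_le_augVal_mul hμ hγ _ _)
    · exact (WithTop.add_lt_add_left hf hg₁).trans_le
        ((add_le_add_left hF _).trans (hk.augVal_add_augVal_le_augVal_mul hμ hγ _ _))
  have hY : augVal μ φ γ Y ≤ c := by
    have h0 := augVal_le hμ hφ hφ0 (γ := γ) (F * G) 0
    rw [expCoeff_zero_eq_modByMonic, zero_smul, add_zero, mul_modByMonic,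
      hk.map_modByMonic_mul hμ (degree_modByMonic_lt _ hφ) (degree_modByMonic_lt _ hφ)] at h0
    calc augVal μ φ γ Y = augVal μ φ γ (F * G) + (s + t) • γ := augVal_mul_pow hμ hφ hφ0 _ _
      _ ≤ μ (F %ₘ φ) + μ (G %ₘ φ) + (s • γ + t • γ) := by rw [add_nsmul]; gcongr
      _ = (μ (F %ₘ φ) + s • γ) + (μ (G %ₘ φ) + t • γ) := by abel
      _ = c := by rw [hFs, hGt]
  by_contra! hlt
  have hmin' := min_augVal_le_augVal_add hμ hφ hφ0 (γ := γ) (f * g) (-X)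
  rw [augVal_neg hμ hφ, hfg, add_neg_cancel_comm] at hmin'
  exact absurd (lt_min (hfg ▸ hlt) hX) (not_lt.mpr (hmin'.trans hY))

theorem augVal_isValT : IsValT v (augVal μ φ γ) := by
  have ⟨hφ, hmin, _⟩ := hk
  exact ⟨by simpa [v.map_one'] using augVal_C hμ hφ hmin.1 (γ := γ) 1,
    by simpa [v.map_zero'] using augVal_C hμ hφ hmin.1 (γ := γ) 0,
    hk.augVal_mul hμ hγ, min_augVal_le_augVal_add hμ hφ hmin.1, augVal_C hμ hφ hmin.1⟩

end IsKeyPol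

section Increase

variable (hμ : IsValT v μ) (hν : IsValT v ν) (hle : μ ≤ ν)
include hμ hν hle

theorem MuEquiv.lt_of_lt {h : K[X]} (hgh : MuEquiv μ g h) (hh : μ h < ν h) : μ g < ν g := by
  have hμh := hμ.map_eq_of_muEquiv hgh
  calc μ g < min (ν h) (ν (g - h)) := lt_min (hμh ▸ hh) (hgh.trans_le (hle _))
    _ ≤ ν g := by simpa using hν.min_le_map_add h (g - h)

theorem map_mul_lt_map_mul {w : K[X]} (hw : μ w ≠ ⊤) (hφ : μ φ < ν φ) :
    μ (w * φ) < ν (w * φ) := by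
  rw [hμ.map_mul, hν.map_mul]
  exact WithTop.add_lt_add_of_le_of_lt hw (hle w) hφ

theorem MuDvd.lt_of_lt (hdvd : MuDvd μ φ g) (hφ : μ φ < ν φ) : μ g < ν g := by
  obtain ⟨w, hw⟩ := hdvd
  refine hw.lt_of_lt hμ hν hle (map_mul_lt_map_mul hμ hν hle (fun h => ?_) hφ)
  exact hw.ne_top (hμ.map_eq_of_muEquiv hw ▸ by rw [hμ.map_mul, h, top_add])

end Increase

theorem exists_mem_tangentDir (hμ : IsValT v μ) (hν : IsValT v ν) (hlt : μ < ν) :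
    ∃ φ, φ ∈ TangentDir μ ν := by
  classical
  obtain ⟨-, f, hf⟩ := Pi.lt_def.mp hlt
  obtain ⟨g, hg, -, hgν⟩ := exists_monic_of_lt hμ hν hf
  have hP : ∃ n, ∃ g : K[X], g.Monic ∧ μ g < ν g ∧ g.natDegree = n := ⟨_, g, hg, hgν, rfl⟩
  obtain ⟨φ, hφ, hφν, hdeg⟩ := Nat.find_spec hP
  exact ⟨φ, hφ, hφν, fun ψ hψ hψν => hdeg ▸ Nat.find_min' hP ⟨ψ, hψ, hψν, rfl⟩⟩

theorem mem_tangentDir_augVal (hμ : IsValT v μ) (hk : IsKeyPol μ φ) {γ : WithTop Λ}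
    (hγ : μ φ < γ) : φ ∈ TangentDir μ (augVal μ φ γ) := by
  refine ⟨hk.1, by rwa [augVal_self hμ hk.1 hk.2.1.1], fun ψ hψ hψν => ?_⟩
  by_contra! hdeg
  rw [augVal_of_degree_lt hμ hk.1 hk.2.1.1 (degree_lt_degree hdeg)] at hψν
  exact hψν.false

namespace TangentDir

theorem natDegree_pos (hμ : IsValT v μ) (hν : IsValT v ν) (htd : φ ∈ TangentDir μ ν) :
    0 < φ.natDegree := by
  by_contra! h
  have hφν := htd.2.1
  rw [htd.1.natDegree_eq_zero.mp (Nat.le_zero.mp h), hμ.map_one, hν.map_one] at hφν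
  exact hφν.false

variable (hμ : IsValT v μ) (hν : IsValT v ν) (hle : μ ≤ ν) (htd : φ ∈ TangentDir μ ν)
include hμ hν hle htd

theorem map_eq_of_degree_lt {f : K[X]} (hf : f.degree < φ.degree) : ν f = μ f := by
  by_contra h
  obtain ⟨g, hg, hdeg, hgν⟩ := exists_monic_of_lt hμ hν ((hle f).lt_of_ne (Ne.symm h))
  have hf0 : f ≠ 0 := by rintro rfl; exact h (by rw [hμ.map_zero, hν.map_zero])
  have := htd.2.2 g hg hgν
  have := natDegree_lt_natDegree hf0 hf
  omega

theorem isMuMinimal : IsMuMinimal μ φ :=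
  ⟨natDegree_pos hμ hν htd, fun _ _ hf hdvd =>
    (hdvd.lt_of_lt hμ hν hle htd.2.1).ne (map_eq_of_degree_lt hμ hν hle htd hf).symm⟩

theorem muEquiv_divByMonic_mul (hg : μ g < ν g) : MuEquiv μ g (g /ₘ φ * φ) := by
  have hφ := htd.1
  have hmin := isMuMinimal hμ hν hle htd
  have hq : μ g < ν (φ * (g /ₘ φ)) := by
    by_cases hq : μ (g /ₘ φ) = ⊤
    · have hνq : ν (g /ₘ φ) = ⊤ := top_unique (by rw [← hq]; exact hle _)
      rw [hν.map_mul, hνq, add_top]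
      exact hg.trans_le le_top
    · calc μ g ≤ μ φ + μ (g /ₘ φ) := hmin.map_le_map_add_map_divByMonic hμ hφ g
        _ < ν (φ * (g /ₘ φ)) := by
            rw [hν.map_mul]; exact WithTop.add_lt_add_of_lt_of_le hq htd.2.1 (hle _)
  have hr : g - g /ₘ φ * φ = g %ₘ φ := by linear_combination -modByMonic_add_div g φ
  rw [MuEquiv, hr, ← map_eq_of_degree_lt hμ hν hle htd (degree_modByMonic_lt g hφ)]
  calc μ g < min (ν g) (ν (φ * (g /ₘ φ))) := lt_min hg hq
    _ ≤ ν (g %ₘ φ) := by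
        simpa [show g - φ * (g /ₘ φ) = g %ₘ φ by rw [← hr, mul_comm]] using
          hν.min_le_map_sub g (φ * (g /ₘ φ))

theorem muDvd_of_lt (hg : μ g < ν g) : MuDvd μ φ g :=
  ⟨_, muEquiv_divByMonic_mul hμ hν hle htd hg⟩

theorem isKeyPol : IsKeyPol μ φ := by
  refine ⟨htd.1, isMuMinimal hμ hν hle htd, htd.2.1.ne_top, ?_, fun f h hdvd => ?_⟩
  · rintro ⟨w, hw⟩
    have hw0 : μ w ≠ ⊤ := fun h => by
      have h1 := hμ.map_eq_of_muEquiv hw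
      simp [hμ.map_one, hμ.map_mul, h] at h1
    have := (hw.symm hμ).lt_of_lt hμ hν hle (map_mul_lt_map_mul hμ hν hle hw0 htd.2.1)
    rw [hμ.map_one, hν.map_one] at this
    exact this.false
  · have hfh := hdvd.lt_of_lt hμ hν hle htd.2.1
    rw [hμ.map_mul, hν.map_mul] at hfh
    by_cases hf : μ f < ν f
    · exact Or.inl (muDvd_of_lt hμ hν hle htd hf)
    · refine Or.inr (muDvd_of_lt hμ hν hle htd ((hle h).lt_of_ne fun hh => hfh.ne ?_))
      rw [le_antisymm (not_lt.mp hf) (hle f), hh]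

theorem mem_of_lt_of_le (hρ : IsValT v ρ) (hμρ : μ < ρ) (hρν : ρ ≤ ν) :
    φ ∈ TangentDir μ ρ := by
  refine ⟨htd.1, ?_, fun ψ hψ hψρ => htd.2.2 ψ hψ (hψρ.trans_le (hρν ψ))⟩
  -- Otherwise `ρ φ = μ φ`; for a tangent direction `ψ` of `(μ, ρ]`, `ψ ∼_μ (ψ /ₘ φ) * φ` then
  -- makes `ψ /ₘ φ`, of smaller degree than `ψ`, increase from `μ` to `ρ`.
  by_contra hρφ
  have hρφ : ρ φ = μ φ := le_antisymm (not_lt.mp hρφ) (hμρ.le φ)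
  obtain ⟨ψ, hψ, hψρ, hψmin⟩ := exists_mem_tangentDir hμ hρ hμρ
  have hψν : μ ψ < ν ψ := hψρ.trans_le (hρν ψ)
  have hw := muEquiv_divByMonic_mul hμ hν hle htd hψν
  have hwρ := (hw.symm hμ).lt_of_lt hμ hρ hμρ.le hψρ
  rw [hμ.map_mul, hρ.map_mul, hρφ] at hwρ
  obtain ⟨w, hw, hwdeg, hwρ⟩ := exists_monic_of_lt hμ hρ (lt_of_add_lt_add_right hwρ)
  have := hψmin w hw hwρ
  have := htd.2.2 ψ hψ hψν
  have := natDegree_pos hμ hν htd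
  rw [natDegree_divByMonic ψ htd.1] at hwdeg
  omega

end TangentDir

theorem TangentDir.muEquiv (hμ : IsValT v μ) (hρ : IsValT v ρ) (hle : μ ≤ ρ)
    (hφ : φ ∈ TangentDir μ ρ) (hψ : ψ ∈ TangentDir μ ρ) : MuEquiv μ φ ψ := by
  have hdeg : φ.degree = ψ.degree := by
    rw [degree_eq_natDegree hφ.1.ne_zero, degree_eq_natDegree hψ.1.ne_zero,
      le_antisymm (hφ.2.2 ψ hψ.1 hψ.2.1) (hψ.2.2 φ hφ.1 hφ.2.1)]
  have hsub := degree_sub_lt_left hdeg hφ.1.ne_zero (by rw [hφ.1.leadingCoeff, hψ.1.leadingCoeff])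
  have hlt : min (μ φ) (μ ψ) < μ (φ - ψ) := by
    rw [← TangentDir.map_eq_of_degree_lt hμ hρ hle hφ hsub]
    exact (min_lt_min hφ.2.1 hψ.2.1).trans_le (hρ.min_le_map_sub φ ψ)
  rcases le_or_gt (μ φ) (μ ψ) with h | h
  · rwa [min_eq_left h] at hlt
  · rw [min_eq_right h.le, sub_eq_neg_add,
      hμ.map_add_of_lt (by rwa [hμ.map_neg]), hμ.map_neg] at hlt
    exact hlt.false.elim

theorem IsKeyPol.degree_eq_of_muEquiv (hμ : IsValT v μ) (hk : IsKeyPol μ φ)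
    (hk' : IsKeyPol μ φ') (h : MuEquiv μ φ φ') : φ.degree = φ'.degree := by
  rcases lt_trichotomy φ.degree φ'.degree with hlt | heq | hgt
  · exact (hk'.2.1.2 φ hk.1.ne_zero hlt ⟨1, by rwa [one_mul]⟩).elim
  · exact heq
  · exact (hk.2.1.2 φ' hk'.1.ne_zero hgt ⟨1, by rw [one_mul]; exact h.symm hμ⟩).elim

end MLV

open MLV

section TanRel

variable {K : Type*} [Field K] {Λ : Type*} [AddCommGroup Λ] [LinearOrder Λ] [IsOrderedAddMonoid Λ]
  {v : FieldVal K Λ} {μ ν ν' ν'' ρ ρ' : K[X] → WithTop Λ} {φ φ' : K[X]}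

theorem tanRel_of_lt (hμ : IsValT v μ) (hk : IsKeyPol μ φ) (hρ : IsValT v ρ)
    (hρ' : IsValT v ρ') (hμρ : μ ≤ ρ) (hμρ' : μ ≤ ρ') (hφ : μ φ < ρ φ) (hφ' : μ φ < ρ' φ) :
    TanRel v μ ρ ρ' :=
  ⟨augVal μ φ (min (ρ φ) (ρ' φ)), hk.augVal_isValT hμ (lt_min hφ hφ').le,
    hk.2.1.lt_augVal hμ hk.1 (lt_min hφ hφ'),
    augVal_le_of_le hμ hk.1 hk.2.1.1 hρ hμρ (min_le_left _ _),
    augVal_le_of_le hμ hk.1 hk.2.1.1 hρ' hμρ' (min_le_right _ _)⟩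

theorem TanRel.symm (h : TanRel v μ ν ν') : TanRel v μ ν' ν :=
  let ⟨ρ, hρ, hμρ, hρν, hρν'⟩ := h
  ⟨ρ, hρ, hμρ, hρν', hρν⟩

theorem TanRel.trans (hμ : IsValT v μ) (hν' : IsValT v ν') (hμν' : μ < ν')
    (h₁ : TanRel v μ ν ν') (h₂ : TanRel v μ ν' ν'') : TanRel v μ ν ν'' := by
  obtain ⟨ρ, hρ, hμρ, hρν, hρν'⟩ := h₁
  obtain ⟨ρ', hρ', hμρ', hρ'ν', hρ'ν''⟩ := h₂
  obtain ⟨φ, htd⟩ := exists_mem_tangentDir hμ hν' hμν'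
  obtain ⟨σ, hσ, hμσ, hσρ, hσρ'⟩ :=
    tanRel_of_lt hμ (TangentDir.isKeyPol hμ hν' hμν'.le htd) hρ hρ' hμρ.le hμρ'.le
      (TangentDir.mem_of_lt_of_le hμ hν' hμν'.le htd hρ hμρ hρν').2.1
      (TangentDir.mem_of_lt_of_le hμ hν' hμν'.le htd hρ' hμρ' hρ'ν').2.1
  exact ⟨σ, hσ, hμσ, hσρ.trans hρν, hσρ'.trans hρ'ν''⟩

theorem tanRel_augVal_augVal (hμ : IsValT v μ) (hk : IsKeyPol μ φ) {γ γ' : WithTop Λ}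
    (hγ : μ φ < γ) (hγ' : μ φ < γ') : TanRel v μ (augVal μ φ γ) (augVal μ φ γ') :=
  tanRel_of_lt hμ hk (hk.augVal_isValT hμ hγ.le) (hk.augVal_isValT hμ hγ'.le)
    (hk.2.1.le_augVal hμ hk.1 hγ.le) (hk.2.1.le_augVal hμ hk.1 hγ'.le)
    (by rwa [augVal_self hμ hk.1 hk.2.1.1]) (by rwa [augVal_self hμ hk.1 hk.2.1.1])

theorem exists_isKeyPol_tanRel_augVal (hμ : IsValT v μ) (hν : IsValT v ν) (hμν : μ < ν) :
    ∃ φ, IsKeyPol μ φ ∧ ∀ γ : WithTop Λ, μ φ < γ → TanRel v μ (augVal μ φ γ) ν := by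
  obtain ⟨φ, htd⟩ := exists_mem_tangentDir hμ hν hμν
  have hk := TangentDir.isKeyPol hμ hν hμν.le htd
  exact ⟨φ, hk, fun γ hγ => tanRel_of_lt hμ hk (hk.augVal_isValT hμ hγ.le) hν
    (hk.2.1.le_augVal hμ hk.1 hγ.le) hμν.le (by rwa [augVal_self hμ hk.1 hk.2.1.1]) htd.2.1⟩

theorem tanRel_augVal_top_of_muEquiv (hμ : IsValT v μ) (hk : IsKeyPol μ φ)
    (hk' : IsKeyPol μ φ') (h : MuEquiv μ φ φ') :
    TanRel v μ (augVal μ φ ⊤) (augVal μ φ' ⊤) := by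
  have hdeg := hk.degree_eq_of_muEquiv hμ hk' h
  have hsub : (φ - φ').degree < φ'.degree := hdeg ▸
    degree_sub_lt_left hdeg hk.1.ne_zero (by rw [hk.1.leadingCoeff, hk'.1.leadingCoeff])
  have hφ' : μ φ < augVal μ φ' ⊤ φ := by
    calc μ φ < min ⊤ (μ (φ - φ')) := lt_min (lt_top_iff_ne_top.mpr hk.2.2.1) h
      _ = min (augVal μ φ' ⊤ φ') (augVal μ φ' ⊤ (φ - φ')) := by
          rw [augVal_self hμ hk'.1 hk'.2.1.1, augVal_of_degree_lt hμ hk'.1 hk'.2.1.1 hsub]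
      _ ≤ augVal μ φ' ⊤ φ := by
          simpa using min_augVal_le_augVal_add hμ hk'.1 hk'.2.1.1 φ' (φ - φ')
  exact tanRel_of_lt hμ hk (hk.augVal_isValT hμ le_top) (hk'.augVal_isValT hμ le_top)
    (hk.2.1.le_augVal hμ hk.1 le_top) (hk'.2.1.le_augVal hμ hk'.1 le_top)
    (by rw [augVal_self hμ hk.1 hk.2.1.1]; exact lt_top_iff_ne_top.mpr hk.2.2.1) hφ'

theorem muEquiv_of_tanRel_augVal (hμ : IsValT v μ) (hk : IsKeyPol μ φ) (hk' : IsKeyPol μ φ')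
    {γ γ' : WithTop Λ} (hγ : μ φ < γ) (hγ' : μ φ' < γ')
    (h : TanRel v μ (augVal μ φ γ) (augVal μ φ' γ')) : MuEquiv μ φ φ' := by
  obtain ⟨ρ, hρ, hμρ, hρν, hρν'⟩ := h
  exact TangentDir.muEquiv hμ hρ hμρ.le
    (TangentDir.mem_of_lt_of_le hμ (hk.augVal_isValT hμ hγ.le) (hk.2.1.le_augVal hμ hk.1 hγ.le)
      (mem_tangentDir_augVal hμ hk hγ) hρ hμρ hρν)
    (TangentDir.mem_of_lt_of_le hμ (hk'.augVal_isValT hμ hγ'.le) (hk'.2.1.le_augVal hμ hk'.1 hγ'.le)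
      (mem_tangentDir_augVal hμ hk' hγ') hρ hμρ hρν')

end TanRel

theorem statement_5_general {K : Type*} [Field K] {Λ : Type*} [AddCommGroup Λ] [LinearOrder Λ] [IsOrderedAddMonoid Λ]
    (v : FieldVal K Λ) (μ : Polynomial K → WithTop Λ) (hμ : IsValT v μ) :
    ((∀ ν : Polynomial K → WithTop Λ, IsValT v ν → μ < ν → TanRel v μ ν ν) ∧
     (∀ ν ν' : Polynomial K → WithTop Λ, IsValT v ν → IsValT v ν' → μ < ν → μ < ν' →
        TanRel v μ ν ν' → TanRel v μ ν' ν) ∧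
     (∀ ν ν' ν'' : Polynomial K → WithTop Λ, IsValT v ν → IsValT v ν' → IsValT v ν'' →
        μ < ν → μ < ν' → μ < ν'' →
        TanRel v μ ν ν' → TanRel v μ ν' ν'' → TanRel v μ ν ν'')) ∧
    (∀ φ : Polynomial K, IsKeyPol μ φ → ∀ γ γ' : WithTop Λ, μ φ < γ → μ φ < γ' →
      TanRel v μ (augVal μ φ γ) (augVal μ φ γ')) ∧
    (∀ ν : Polynomial K → WithTop Λ, IsValT v ν → μ < ν →
      ∃ φ : Polynomial K, IsKeyPol μ φ ∧
        ∀ γ : WithTop Λ, μ φ < γ → TanRel v μ (augVal μ φ γ) ν) ∧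
    (∀ φ φ' : Polynomial K, IsKeyPol μ φ → IsKeyPol μ φ' →
      ((∃ γ γ' : WithTop Λ, μ φ < γ ∧ μ φ' < γ' ∧
          TanRel v μ (augVal μ φ γ) (augVal μ φ' γ')) ↔ MuEquiv μ φ φ')) := by
  refine ⟨⟨fun ν hν hμν => ⟨ν, hν, hμν, le_rfl, le_rfl⟩,
      fun _ _ _ _ _ _ h => h.symm,
      fun _ _ _ _ hν' _ _ hμν' _ h₁ h₂ => h₁.trans hμ hν' hμν' h₂⟩,
    fun _ hk _ _ hγ hγ' => tanRel_augVal_augVal hμ hk hγ hγ',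
    fun _ hν hμν => exists_isKeyPol_tanRel_augVal hμ hν hμν,
    fun φ φ' hk hk' => ⟨fun ⟨_, _, hγ, hγ', h⟩ => muEquiv_of_tanRel_augVal hμ hk hk' hγ hγ' h,
      fun h => ⟨⊤, ⊤, lt_top_iff_ne_top.mpr hk.2.2.1, lt_top_iff_ne_top.mpr hk'.2.2.1,
        tanRel_augVal_top_of_muEquiv hμ hk hk' h⟩⟩⟩

/-- The relation `∼_tan` is an equivalence relation on `{ν ∈ T : μ < ν}`; the class of
`[μ; φ, γ]` does not depend on `γ`; the induced map `t_μ` from `KP(μ)` to the set of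
tangent directions `TD(μ)` is surjective, and its fibres are the `μ`-equivalence classes,
so it induces a bijection between `KP(μ)/∼_μ` and `TD(μ)`. -/
theorem statement_5 {K : Type*} [Field K] {Λ : Type*} [AddCommGroup Λ] [LinearOrder Λ] [IsOrderedAddMonoid Λ]
    (v : FieldVal K Λ) (μ : Polynomial K → WithTop Λ) (hμ : IsValT v μ)
    (hin : IsInnerNode μ) :
    ((∀ ν : Polynomial K → WithTop Λ, IsValT v ν → μ < ν → TanRel v μ ν ν) ∧
     (∀ ν ν' : Polynomial K → WithTop Λ, IsValT v ν → IsValT v ν' → μ < ν → μ < ν' →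
        TanRel v μ ν ν' → TanRel v μ ν' ν) ∧
     (∀ ν ν' ν'' : Polynomial K → WithTop Λ, IsValT v ν → IsValT v ν' → IsValT v ν'' →
        μ < ν → μ < ν' → μ < ν'' →
        TanRel v μ ν ν' → TanRel v μ ν' ν'' → TanRel v μ ν ν'')) ∧
    (∀ φ : Polynomial K, IsKeyPol μ φ → ∀ γ γ' : WithTop Λ, μ φ < γ → μ φ < γ' →
      TanRel v μ (augVal μ φ γ) (augVal μ φ γ')) ∧
    (∀ ν : Polynomial K → WithTop Λ, IsValT v ν → μ < ν →
      ∃ φ : Polynomial K, IsKeyPol μ φ ∧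
        ∀ γ : WithTop Λ, μ φ < γ → TanRel v μ (augVal μ φ γ) ν) ∧
    (∀ φ φ' : Polynomial K, IsKeyPol μ φ → IsKeyPol μ φ' →
      ((∃ γ γ' : WithTop Λ, μ φ < γ ∧ μ φ' < γ' ∧
          TanRel v μ (augVal μ φ γ) (augVal μ φ' γ')) ↔ MuEquiv μ φ φ')) :=
  statement_5_general v μ hμ
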